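/- arXiv:math/0311232 — 4 statements merged into one kernel-verified Lean document; each statement's English description precedes it below -/
import Mathlib

section
/- Let φ : ℝ → ℝ be twice differentiable, positive on an interval I containing t₀, and satisfy φ'' - φ ≥ 0 on I. Define φ₀(t) = φ(t₀)cosh(t - t₀) + φ'(t₀)sinh(t - t₀). Then φ(t) ≥ φ₀(t) for all t ∈ I. -/
/-!
With `u := φ - φ₀` one has `u'' ≥ u`, `u(t₀) = u'(t₀) = 0`. Factor `D² - 1 = (D + 1)(D - 1)`:
`p := u' + u` satisfies `p' - p ≥ 0`, so `e^{-t} p` is nondecreasing and `p ≥ 0` right of `t₀`;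
then `e^{t} u` is nondecreasing there, so `u ≥ 0`. Symmetrically, `q := u' - u` satisfies
`q' + q ≥ 0`, so `q ≤ 0` left of `t₀`, and then `e^{-t} u` is nonincreasing there, so `u ≥ 0`.
-/

open Real

section FirstOrder

variable {f f' : ℝ → ℝ} {I : Set ℝ}

theorem monotoneOn_exp_mul_of_hasDerivAt (hI : I.OrdConnected) (c : ℝ)
    (hf : ∀ t ∈ I, HasDerivAt f (f' t) t) (h : ∀ t ∈ I, 0 ≤ f' t + c * f t) :
    MonotoneOn (fun t => exp (c * t) * f t) I := by
  have hderiv : ∀ t ∈ I,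
      HasDerivAt (fun t => exp (c * t) * f t) (exp (c * t) * (f' t + c * f t)) t := by
    intro t ht
    exact (((hasDerivAt_id' t).const_mul c).exp.mul (hf t ht)).congr_deriv (by ring)
  refine monotoneOn_of_hasDerivWithinAt_nonneg hI.convex
    (fun t ht => (hderiv t ht).continuousAt.continuousWithinAt)
    (fun t ht => (hderiv t (interior_subset ht)).hasDerivWithinAt) fun t ht => ?_
  exact mul_nonneg (exp_nonneg _) (h t (interior_subset ht))

theorem nonneg_of_hasDerivAt_of_le (hI : I.OrdConnected) (c : ℝ)
    (hf : ∀ t ∈ I, HasDerivAt f (f' t) t) (h : ∀ t ∈ I, 0 ≤ f' t + c * f t)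
    {t₀ t : ℝ} (ht₀ : t₀ ∈ I) (hf₀ : 0 ≤ f t₀) (ht : t ∈ I) (hle : t₀ ≤ t) : 0 ≤ f t := by
  have hmono := monotoneOn_exp_mul_of_hasDerivAt hI c hf h ht₀ ht hle
  exact nonneg_of_mul_nonneg_right ((mul_nonneg (exp_nonneg _) hf₀).trans hmono) (exp_pos _)

theorem nonpos_of_hasDerivAt_of_le (hI : I.OrdConnected) (c : ℝ)
    (hf : ∀ t ∈ I, HasDerivAt f (f' t) t) (h : ∀ t ∈ I, 0 ≤ f' t + c * f t)
    {t₀ t : ℝ} (ht₀ : t₀ ∈ I) (hf₀ : f t₀ ≤ 0) (ht : t ∈ I) (hle : t ≤ t₀) : f t ≤ 0 := by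
  have hmono := monotoneOn_exp_mul_of_hasDerivAt hI c hf h ht ht₀ hle
  exact nonpos_of_mul_nonpos_right (hmono.trans (mul_nonpos_of_nonneg_of_nonpos (exp_nonneg _) hf₀))
    (exp_pos _)

end FirstOrder

theorem nonneg_of_self_le_second_deriv {u u' u'' : ℝ → ℝ} {I : Set ℝ} (hI : I.OrdConnected)
    (hu : ∀ t ∈ I, HasDerivAt u (u' t) t) (hu' : ∀ t ∈ I, HasDerivAt u' (u'' t) t)
    (h : ∀ t ∈ I, u t ≤ u'' t) {t₀ : ℝ} (ht₀ : t₀ ∈ I) (h₀ : |u' t₀| ≤ u t₀) :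
    ∀ t ∈ I, 0 ≤ u t := by
  have hu₀ : 0 ≤ u t₀ := (abs_nonneg _).trans h₀
  obtain ⟨hp₀, hq₀⟩ := abs_le.mp h₀
  intro t ht
  rcases le_total t₀ t with hle | hle
  · have hp : ∀ s ∈ I, t₀ ≤ s → 0 ≤ u' s + u s := fun s hs hs₀ =>
      nonneg_of_hasDerivAt_of_le hI (-1) (f := fun s => u' s + u s)
        (fun r hr => (hu' r hr).add (hu r hr))
        (fun r hr => by linarith [h r hr]) ht₀ (by linarith) hs hs₀
    exact nonneg_of_hasDerivAt_of_le (hI.inter Set.ordConnected_Ici) 1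
      (fun s hs => hu s hs.1) (fun s hs => by linarith [hp s hs.1 hs.2])
      ⟨ht₀, Set.self_mem_Ici⟩ hu₀ ⟨ht, hle⟩ hle
  · have hq : ∀ s ∈ I, s ≤ t₀ → u' s - u s ≤ 0 := fun s hs hs₀ =>
      nonpos_of_hasDerivAt_of_le hI 1 (f := fun s => u' s - u s)
        (fun r hr => (hu' r hr).sub (hu r hr))
        (fun r hr => by linarith [h r hr]) ht₀ (by linarith) hs hs₀
    have := nonpos_of_hasDerivAt_of_le (hI.inter Set.ordConnected_Iic) (-1) (f := fun s => -u s)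
      (fun s hs => (hu s hs.1).neg) (fun s hs => by linarith [hq s hs.1 hs.2])
      ⟨ht₀, Set.self_mem_Iic⟩ (by linarith) ⟨ht, hle⟩ hle
    exact neg_nonpos.mp this

theorem hasDerivAt_mul_cosh_add_mul_sinh (a b t₀ t : ℝ) :
    HasDerivAt (fun s => a * cosh (s - t₀) + b * sinh (s - t₀))
      (b * cosh (t - t₀) + a * sinh (t - t₀)) t := by
  have hshift := (hasDerivAt_id' t).sub_const t₀
  exact (((hshift.cosh).const_mul a).add ((hshift.sinh).const_mul b)).congr_deriv (by ring)

theorem stmt2_general (φ : ℝ → ℝ) (I : Set ℝ) (hI : I.OrdConnected)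
    (hd1 : Differentiable ℝ φ) (hd2 : Differentiable ℝ (deriv φ))
    (t₀ : ℝ) (ht₀ : t₀ ∈ I)
    (hineq : ∀ t ∈ I, 0 ≤ deriv (deriv φ) t - φ t) :
    ∀ t ∈ I, φ t₀ * Real.cosh (t - t₀) + deriv φ t₀ * Real.sinh (t - t₀) ≤ φ t := by
  set a := φ t₀
  set b := deriv φ t₀
  intro t ht
  have key := nonneg_of_self_le_second_deriv hI
    (u := fun s => φ s - (a * cosh (s - t₀) + b * sinh (s - t₀)))
    (u' := fun s => deriv φ s - (b * cosh (s - t₀) + a * sinh (s - t₀)))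
    (u'' := fun s => deriv (deriv φ) s - (a * cosh (s - t₀) + b * sinh (s - t₀)))
    (fun s _ => (hd1 s).hasDerivAt.sub (hasDerivAt_mul_cosh_add_mul_sinh a b t₀ s))
    (fun s _ => (hd2 s).hasDerivAt.sub (hasDerivAt_mul_cosh_add_mul_sinh b a t₀ s))
    (fun s hs => by linarith [hineq s hs]) ht₀ (by simp [a, b]) t ht
  linarith

theorem stmt2 (φ : ℝ → ℝ) (I : Set ℝ) (hI : I.OrdConnected)
    (hd1 : Differentiable ℝ φ) (hd2 : Differentiable ℝ (deriv φ))
    (t₀ : ℝ) (ht₀ : t₀ ∈ I)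
    (hpos : ∀ t ∈ I, 0 < φ t)
    (hineq : ∀ t ∈ I, 0 ≤ deriv (deriv φ) t - φ t) :
    ∀ t ∈ I, φ t₀ * Real.cosh (t - t₀) + deriv φ t₀ * Real.sinh (t - t₀) ≤ φ t :=
  stmt2_general φ I hI hd1 hd2 t₀ ht₀ hineq
end

section
/- Let φ, φ₀ : ℝ → ℝ be positive and twice differentiable on an interval I containing t₀, with φ'' ≥ φ and φ₀'' = φ₀ on I, φ(t₀) = φ₀(t₀), and φ'(t₀) = φ₀'(t₀). Define h = φ'/φ, h₀ = φ₀'/φ₀, and χ(t) = exp(∫_{t₀}^t (h(τ) + h₀(τ))dτ)·(h(t) − h₀(t)). Then χ'(t) ≥ 0 for all t ∈ I and χ(t₀) = 0. -/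
/-!
The logarithmic derivative `h = φ'/φ` satisfies the Riccati identity `h' + h² = φ''/φ`, and the
integrating factor `exp ∫ (h + h₀)` turns the derivative of `χ` into
`exp (∫ (h + h₀)) · (φ''/φ - φ₀''/φ₀)`, which is nonnegative since `φ''/φ ≥ 1 = φ₀''/φ₀`.
-/

open Real

lemma hasDerivAt_logDeriv {f : ℝ → ℝ} {t : ℝ} (hf : DifferentiableAt ℝ f t)
    (hf' : DifferentiableAt ℝ (deriv f) t) (hft : f t ≠ 0) :
    HasDerivAt (logDeriv f) (deriv (deriv f) t / f t - logDeriv f t ^ 2) t :=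
  (hf'.hasDerivAt.div hf.hasDerivAt hft).congr_deriv (by rw [logDeriv_apply]; field_simp)

lemma measurable_logDeriv {f : ℝ → ℝ} (hf : Continuous f) : Measurable (logDeriv f) :=
  (measurable_deriv f).div hf.measurable

lemma continuousAt_logDeriv {f : ℝ → ℝ} {t : ℝ} (hf : Differentiable ℝ f)
    (hf' : Differentiable ℝ (deriv f)) (hft : f t ≠ 0) : ContinuousAt (logDeriv f) t :=
  hf'.continuous.continuousAt.div hf.continuous.continuousAt hft

lemma hasDerivAt_integral_of_continuousAt {g : ℝ → ℝ} {s : Set ℝ} (hs : s.OrdConnected)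
    {a t : ℝ} (ha : a ∈ s) (ht : t ∈ s) (hg : ∀ x ∈ s, ContinuousAt g x) (hmeas : Measurable g) :
    HasDerivAt (fun x => ∫ τ in a..x, g τ) (g t) t := by
  have hcont : ContinuousOn g (Set.uIcc a t) := fun x hx =>
    (hg x (hs.uIcc_subset ha ht hx)).continuousWithinAt
  exact intervalIntegral.integral_hasDerivAt_right hcont.intervalIntegrable
    hmeas.stronglyMeasurable.stronglyMeasurableAtFilter (hg t ht)

lemma hasDerivAt_exp_mul_sub {F a b : ℝ → ℝ} {a' b' t : ℝ} (hF : HasDerivAt F (a t + b t) t)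
    (ha : HasDerivAt a a' t) (hb : HasDerivAt b b' t) :
    HasDerivAt (fun s => exp (F s) * (a s - b s))
      (exp (F t) * ((a' + a t ^ 2) - (b' + b t ^ 2))) t :=
  (hF.exp.mul (ha.sub hb)).congr_deriv (by simp only [Pi.sub_apply]; ring)

theorem stmt4 (φ φ₀ : ℝ → ℝ) (I : Set ℝ) (hI : I.OrdConnected)
    (hd1 : Differentiable ℝ φ) (hd2 : Differentiable ℝ (deriv φ))
    (hd1' : Differentiable ℝ φ₀) (hd2' : Differentiable ℝ (deriv φ₀))
    (t₀ : ℝ) (ht₀ : t₀ ∈ I)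
    (hpos : ∀ t ∈ I, 0 < φ t) (hpos' : ∀ t ∈ I, 0 < φ₀ t)
    (hφ : ∀ t ∈ I, φ t ≤ deriv (deriv φ) t)
    (hφ₀ : ∀ t ∈ I, deriv (deriv φ₀) t = φ₀ t)
    (hval : φ t₀ = φ₀ t₀) (hder : deriv φ t₀ = deriv φ₀ t₀)
    (h h₀ χ : ℝ → ℝ)
    (hh : h = fun t => deriv φ t / φ t)
    (hh₀ : h₀ = fun t => deriv φ₀ t / φ₀ t)
    (hχ : χ = fun t => Real.exp (∫ τ in t₀..t, (h τ + h₀ τ)) * (h t - h₀ t)) :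
    (∀ t ∈ I, 0 ≤ deriv χ t) ∧ χ t₀ = 0 := by
  subst hh hh₀ hχ
  simp only [← logDeriv_apply]
  refine ⟨fun t ht => ?_, by simp [logDeriv_apply, hval, hder]⟩
  have hF := hasDerivAt_integral_of_continuousAt (g := fun x => logDeriv φ x + logDeriv φ₀ x)
    hI ht₀ ht
    (fun x hx => (continuousAt_logDeriv hd1 hd2 (hpos x hx).ne').add
      (continuousAt_logDeriv hd1' hd2' (hpos' x hx).ne'))
    ((measurable_logDeriv hd1.continuous).add (measurable_logDeriv hd1'.continuous))
  rw [(hasDerivAt_exp_mul_sub hF (hasDerivAt_logDeriv (hd1 t) (hd2 t) (hpos t ht).ne')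
    (hasDerivAt_logDeriv (hd1' t) (hd2' t) (hpos' t ht).ne')).deriv]
  have hcomparison : deriv (deriv φ₀) t / φ₀ t ≤ deriv (deriv φ) t / φ t := by
    rw [hφ₀ t ht, div_self (hpos' t ht).ne']
    exact (one_le_div (hpos t ht)).2 (hφ t ht)
  simp only [sub_add_cancel]
  exact mul_nonneg (exp_pos _).le (sub_nonneg.2 hcomparison)
end

section
/- Let E be a real inner product space, I : ℝ → E twice differentiable, and R : ℝ → (E →ₗ E) with I'' + R(I) = 0 and ⟨R(t)v, v⟩ ≤ 0 for all t, v. If ‖I(t)‖ = o(t) as t → ±∞ (sub-linear growth), then ‖I(t)‖ is constant, I'(t) = 0 for all t, and ⟨R(t)(I(t)), I(t)⟩ = 0 for all t. -/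
/-!
Put `G t = √(‖I t‖² + 1)` (the `+ 1` makes it smooth where `I` vanishes). Since
`(‖I‖²)'' = 2 (‖I'‖² + ⟪I, I''⟫) = 2 (‖I'‖² - ⟪R I, I⟫) ≥ 2 ‖I'‖²`, Cauchy–Schwarz
gives `((‖I‖² + 1)')² ≤ 2 (‖I‖² + 1) (‖I‖² + 1)''`, which is exactly the convexity of `G`.
A convex function on `ℝ` growing sublinearly at both ends has all secant slopes `0`, so
`G`, hence `‖I‖²`, is constant. Then `(‖I‖²)'' = 0`, and both of its nonnegative summands
vanish.
-/

open RealInnerProductSpace Filter Asymptotics Set Topology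

theorem tendsto_secant_zero_of_isLittleO {f : ℝ → ℝ} {l : Filter ℝ}
    (hl : Tendsto (fun t => |t|) l atTop) (hf : f =o[l] fun t => |t|) (a : ℝ) :
    Tendsto (fun t => (f t - f a) / (t - a)) l (𝓝 0) := by
  have hconst : ∀ c : ℝ, (fun _ => c) =o[l] id := fun c =>
    isLittleO_const_left.2 (Or.inr hl)
  have hshift : (fun t => t - a) ~[l] id :=
    (hconst (-a)).congr_left fun t => by simp [sub_eq_add_neg]
  exact ((isLittleO_abs_right.1 hf).sub (hconst (f a))).trans_isBigO
    hshift.symm.isBigO |>.tendsto_div_nhds_zero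

theorem ConvexOn.le_of_isLittleO {f : ℝ → ℝ} (hf : ConvexOn ℝ univ f)
    (htop : f =o[atTop] fun t => |t|) (hbot : f =o[atBot] fun t => |t|) (a b : ℝ) :
    f b ≤ f a := by
  rcases lt_trichotomy b a with hba | rfl | hab
  · have hslope : 0 ≤ (f b - f a) / (b - a) := by
      refine le_of_tendsto (tendsto_secant_zero_of_isLittleO tendsto_abs_atBot_atTop hbot a) ?_
      filter_upwards [eventually_lt_atBot b] with t htb
      exact hf.secant_mono (mem_univ a) (mem_univ t) (mem_univ b) (by linarith) hba.ne htb.le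
    simpa using (le_div_iff_of_neg (sub_neg.2 hba)).1 hslope
  · exact le_rfl
  · have hslope : (f b - f a) / (b - a) ≤ 0 := by
      refine ge_of_tendsto (tendsto_secant_zero_of_isLittleO tendsto_abs_atTop_atTop htop a) ?_
      filter_upwards [eventually_gt_atTop b] with t hbt
      exact hf.secant_mono (mem_univ a) (mem_univ b) (mem_univ t) hab.ne' (by linarith) hbt.le
    simpa using (div_le_iff₀ (sub_pos.2 hab)).1 hslope

theorem convexOn_univ_sqrt_of_sq_deriv_le {u u' u'' : ℝ → ℝ}
    (hu : ∀ t, HasDerivAt u (u' t) t) (hu' : ∀ t, HasDerivAt u' (u'' t) t)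
    (hpos : ∀ t, 0 < u t) (hle : ∀ t, u' t ^ 2 ≤ 2 * u t * u'' t) :
    ConvexOn ℝ univ fun t => √(u t) := by
  have hsqrt : ∀ t, HasDerivAt (fun t => √(u t)) (u' t / (2 * √(u t))) t := fun t =>
    (hu t).sqrt (hpos t).ne'
  have hsqrt' : ∀ t, HasDerivAt (fun t => u' t / (2 * √(u t)))
      ((u'' t * (2 * √(u t)) - u' t * (2 * (u' t / (2 * √(u t))))) / (2 * √(u t)) ^ 2) t :=
    fun t => (hu' t).div ((hsqrt t).const_mul 2) (by positivity [Real.sqrt_pos.2 (hpos t)])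
  refine convexOn_of_hasDerivWithinAt2_nonneg convex_univ
    (fun t _ => (hsqrt t).continuousAt.continuousWithinAt)
    (fun t _ => (hsqrt t).hasDerivWithinAt) (fun t _ => (hsqrt' t).hasDerivWithinAt) fun t _ => ?_
  have hs : 0 < √(u t) := Real.sqrt_pos.2 (hpos t)
  have hnum : u'' t * (2 * √(u t)) - u' t * (2 * (u' t / (2 * √(u t))))
      = (2 * u t * u'' t - u' t ^ 2) / √(u t) := by
    field_simp
    rw [Real.sq_sqrt (hpos t).le]
  rw [hnum]
  exact div_nonneg (div_nonneg (sub_nonneg.2 (hle t)) hs.le) (sq_nonneg _)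

section SecondOrder

variable {E : Type*} [NormedAddCommGroup E] [InnerProductSpace ℝ E] {I : ℝ → E}

theorem hasDerivAt_two_mul_inner_deriv (hd1 : Differentiable ℝ I)
    (hd2 : Differentiable ℝ (deriv I)) (t : ℝ) :
    HasDerivAt (fun t => 2 * ⟪I t, deriv I t⟫)
      (2 * (‖deriv I t‖ ^ 2 + ⟪I t, deriv (deriv I) t⟫)) t := by
  refine (((hd1 t).hasDerivAt.inner ℝ (hd2 t).hasDerivAt).const_mul 2).congr_deriv ?_
  rw [real_inner_self_eq_norm_sq]
  ring

theorem convexOn_sqrt_norm_sq_add_one (hd1 : Differentiable ℝ I)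
    (hd2 : Differentiable ℝ (deriv I)) (hI : ∀ t, 0 ≤ ⟪I t, deriv (deriv I) t⟫) :
    ConvexOn ℝ univ fun t => √(‖I t‖ ^ 2 + 1) := by
  refine convexOn_univ_sqrt_of_sq_deriv_le (fun t => ((hd1 t).hasDerivAt.norm_sq).add_const 1)
    (hasDerivAt_two_mul_inner_deriv hd1 hd2) (fun t => by positivity) fun t => ?_
  have hCS : ⟪I t, deriv I t⟫ ^ 2 ≤ ‖I t‖ ^ 2 * ‖deriv I t‖ ^ 2 := by
    simpa [sq, real_inner_self_eq_norm_sq] using real_inner_mul_inner_self_le (I t) (deriv I t)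
  nlinarith [hI t, sq_nonneg ‖I t‖, sq_nonneg ‖deriv I t‖]

theorem norm_eq_of_isLittleO (hd1 : Differentiable ℝ I) (hd2 : Differentiable ℝ (deriv I))
    (hI : ∀ t, 0 ≤ ⟪I t, deriv (deriv I) t⟫)
    (htop : (fun t => ‖I t‖) =o[atTop] fun t => |t|)
    (hbot : (fun t => ‖I t‖) =o[atBot] fun t => |t|) (s t : ℝ) : ‖I s‖ = ‖I t‖ := by
  set G : ℝ → ℝ := fun t => √(‖I t‖ ^ 2 + 1)
  have hG : ∀ l, (fun t => ‖I t‖) =o[l] (fun t => |t|) → Tendsto (fun t => |t|) l atTop →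
      G =o[l] fun t => |t| := fun l hIl hl =>
    IsBigO.trans_isLittleO (g := fun t => ‖I t‖ + 1)
      (IsBigO.of_bound 1 (Eventually.of_forall fun t => by
        rw [Real.norm_of_nonneg (Real.sqrt_nonneg _), one_mul,
          Real.norm_of_nonneg (by positivity)]
        exact Real.sqrt_le_iff.2 ⟨by positivity, by nlinarith [norm_nonneg (I t)]⟩))
      (hIl.add (isLittleO_const_left.2 (Or.inr (by simpa [Function.comp_def] using hl))))
  have hGtop := hG _ htop tendsto_abs_atTop_atTop
  have hGbot := hG _ hbot tendsto_abs_atBot_atTop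
  have hconv := convexOn_sqrt_norm_sq_add_one hd1 hd2 hI
  have hGst : G s = G t :=
    le_antisymm (hconv.le_of_isLittleO hGtop hGbot t s) (hconv.le_of_isLittleO hGtop hGbot s t)
  rw [Real.sqrt_inj (by positivity) (by positivity)] at hGst
  nlinarith [norm_nonneg (I s), norm_nonneg (I t)]

theorem deriv_eq_zero_of_norm_eq (hd1 : Differentiable ℝ I) (hd2 : Differentiable ℝ (deriv I))
    (hI : ∀ t, 0 ≤ ⟪I t, deriv (deriv I) t⟫) (hnorm : ∀ s t, ‖I s‖ = ‖I t‖) (t : ℝ) :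
    deriv I t = 0 ∧ ⟪I t, deriv (deriv I) t⟫ = 0 := by
  have hfirst : ∀ s, 2 * ⟪I s, deriv I s⟫ = 0 := fun s =>
    (hd1 s).hasDerivAt.norm_sq.unique <|
      (hasDerivAt_const s (‖I 0‖ ^ 2)).congr_of_eventuallyEq
        (Eventually.of_forall fun r => by simp only [hnorm r 0])
  have hsecond : ‖deriv I t‖ ^ 2 + ⟪I t, deriv (deriv I) t⟫ = 0 := by
    have h := (hasDerivAt_two_mul_inner_deriv hd1 hd2 t).unique <|
      (hasDerivAt_const t (0 : ℝ)).congr_of_eventuallyEq (Eventually.of_forall hfirst)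
    linarith
  have hI' : ‖deriv I t‖ ^ 2 = 0 := by linarith [hI t, sq_nonneg ‖deriv I t‖]
  exact ⟨norm_eq_zero.1 (pow_eq_zero_iff two_ne_zero |>.1 hI'), by linarith⟩

end SecondOrder

theorem stmt7 (E : Type*) [NormedAddCommGroup E] [InnerProductSpace ℝ E]
    (I : ℝ → E) (hd1 : Differentiable ℝ I) (hd2 : Differentiable ℝ (deriv I))
    (R : ℝ → E →ₗ[ℝ] E)
    (hJacobi : ∀ t, deriv (deriv I) t + R t (I t) = 0)
    (hK : ∀ t, ∀ v : E, ⟪R t v, v⟫ ≤ 0)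
    (hsubTop : (fun t => ‖I t‖) =o[Filter.atTop] fun t : ℝ => |t|)
    (hsubBot : (fun t => ‖I t‖) =o[Filter.atBot] fun t : ℝ => |t|) :
    (∀ s t, ‖I s‖ = ‖I t‖) ∧ (∀ t, deriv I t = 0) ∧
      (∀ t, ⟪R t (I t), I t⟫ = 0) := by
  have hinner : ∀ t, ⟪I t, deriv (deriv I) t⟫ = -⟪R t (I t), I t⟫ := fun t => by
    rw [eq_neg_of_add_eq_zero_left (hJacobi t), inner_neg_right, real_inner_comm]
  have hI : ∀ t, 0 ≤ ⟪I t, deriv (deriv I) t⟫ := fun t => by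
    rw [hinner]
    exact neg_nonneg.2 (hK t (I t))
  have hnorm := norm_eq_of_isLittleO hd1 hd2 hI hsubTop hsubBot
  refine ⟨hnorm, fun t => (deriv_eq_zero_of_norm_eq hd1 hd2 hI hnorm t).1, fun t => ?_⟩
  simpa [hinner] using (deriv_eq_zero_of_norm_eq hd1 hd2 hI hnorm t).2
end

section
/- Let E be a real inner product space, I : ℝ → E twice differentiable, and R : ℝ → (E →ₗ E) with I'' + R(I) = 0 and ⟨R(t)v, v⟩ ≤ −‖v‖² for all t, v. If ‖I(t)‖ = o(e^{|t|}) as t → ±∞, then I ≡ 0. -/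
/-!
Put `u = √(1 + ‖I‖²) - 1`. Cauchy–Schwarz and `⟪I'', I⟫ ≥ ‖I‖²` give `u'' ≥ u`, so
`(u' + u) e^{-t}` is nondecreasing. If `u' + u > 0` at some `t₀`, then
`u' + u ≥ c e^t` beyond `t₀` with `c > 0`, and integrating `(u e^t)' = (u' + u) e^t` shows that
`u` grows at least like `(c/2) e^t`, against `u = o(e^t)`. Hence `u' + u ≤ 0`, and by time reversal
`u - u' ≤ 0`, so `u ≤ 0` and `I = 0`.
-/

open RealInnerProductSpace Filter Real Asymptotics Topology

theorem monotone_mul_exp_neg_of_le_deriv {f f' : ℝ → ℝ} (hf : ∀ t, HasDerivAt f (f' t) t)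
    (hle : ∀ t, f t ≤ f' t) : Monotone fun t => f t * exp (-t) := by
  refine monotone_of_hasDerivAt_nonneg (f' := fun t => (f' t - f t) * exp (-t))
    (fun t => ((hf t).mul (hasDerivAt_neg t).exp).congr_deriv (by ring)) fun t => ?_
  exact mul_nonneg (sub_nonneg.2 (hle t)) (exp_pos _).le

theorem nonpos_of_mul_exp_le_deriv_add {u u' : ℝ → ℝ} {a c : ℝ}
    (hu : ∀ t, HasDerivAt u (u' t) t) (hlo : u =o[atTop] exp)
    (hc : ∀ t ≥ a, c * exp t ≤ u' t + u t) : c ≤ 0 := by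
  set G : ℝ → ℝ := fun t => u t * exp t - c / 2 * exp t ^ 2
  have hG : MonotoneOn G (Set.Ici a) := by
    refine monotoneOn_of_hasDerivWithinAt_nonneg (convex_Ici a)
      (f' := fun t => exp t * (u' t + u t - c * exp t)) ?_ (fun t _ => ?_) (fun t ht => ?_)
    · exact HasDerivAt.continuousOn fun t _ =>
        ((hu t).mul (hasDerivAt_exp t)).sub (((hasDerivAt_exp t).pow 2).const_mul _)
    · exact (((hu t).mul (hasDerivAt_exp t)).sub
        (((hasDerivAt_exp t).pow 2).const_mul _)).hasDerivWithinAt.congr_deriv (by ring)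
    · rw [interior_Ici] at ht
      exact mul_nonneg (exp_pos t).le (sub_nonneg.2 (hc t (le_of_lt ht)))
  have hbound : ∀ t ≥ a, G a * exp (-t) ^ 2 + c / 2 ≤ u t / exp t := fun t ht => by
    have hGt : G a ≤ G t := hG Set.self_mem_Ici ht ht
    rw [exp_neg, inv_pow, le_div_iff₀ (exp_pos t)]
    field_simp
    linarith [show G t = u t * exp t - c / 2 * exp t ^ 2 from rfl]
  have hlim : Tendsto (fun t => G a * exp (-t) ^ 2 + c / 2) atTop (𝓝 (G a * 0 ^ 2 + c / 2)) :=
    ((tendsto_exp_neg_atTop_nhds_zero.pow 2).const_mul _).add_const _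
  have := le_of_tendsto_of_tendsto hlim hlo.tendsto_div_nhds_zero
    (eventually_ge_atTop a |>.mono hbound)
  linarith

theorem deriv_add_nonpos_of_le_deriv_deriv {u p q : ℝ → ℝ} (hu : ∀ t, HasDerivAt u (p t) t)
    (hp : ∀ t, HasDerivAt p (q t) t) (hq : ∀ t, u t ≤ q t) (hlo : u =o[atTop] exp) (t₀ : ℝ) :
    p t₀ + u t₀ ≤ 0 := by
  have hW := monotone_mul_exp_neg_of_le_deriv (fun t => (hp t).add (hu t))
    (fun t => by simp only [Pi.add_apply]; linarith [hq t])
  have hc : (p t₀ + u t₀) * exp (-t₀) ≤ 0 := by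
    refine nonpos_of_mul_exp_le_deriv_add hu hlo (a := t₀) fun t ht => ?_
    rw [← le_div_iff₀ (exp_pos t), div_eq_mul_inv, ← exp_neg]
    exact hW ht
  exact nonpos_of_mul_nonpos_left hc (exp_pos _)

theorem nonpos_of_le_deriv_deriv {u p q : ℝ → ℝ} (hu : ∀ t, HasDerivAt u (p t) t)
    (hp : ∀ t, HasDerivAt p (q t) t) (hq : ∀ t, u t ≤ q t)
    (htop : u =o[atTop] fun t => exp |t|) (hbot : u =o[atBot] fun t => exp |t|) (t : ℝ) :
    u t ≤ 0 := by
  have hforward := deriv_add_nonpos_of_le_deriv_deriv hu hp hq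
    (htop.congr' .rfl <| (eventually_ge_atTop 0).mono fun t ht => by simp [abs_of_nonneg ht]) t
  have hbackward := deriv_add_nonpos_of_le_deriv_deriv (u := (u <| -·)) (p := (-p <| -·))
    (q := (q <| -·)) (fun t => ((hu (-t)).comp t (hasDerivAt_neg t)).congr_deriv (by simp))
    (fun t => ((hp (-t)).neg.comp t (hasDerivAt_neg t)).congr_deriv (by simp)) (fun t => hq (-t))
    ((hbot.comp_tendsto tendsto_neg_atTop_atBot).congr' .rfl <|
      (eventually_ge_atTop 0).mono fun t ht => by simp [abs_of_nonneg ht]) (-t)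
  simp only [neg_neg, Pi.neg_apply] at hbackward
  linarith

section Curve

variable {E : Type*} [NormedAddCommGroup E] [InnerProductSpace ℝ E]

theorem HasDerivAt.sqrt_one_add_norm_sq {γ : ℝ → E} {v : E} {t : ℝ} (h : HasDerivAt γ v t) :
    HasDerivAt (fun t => √(1 + ‖γ t‖ ^ 2)) (⟪γ t, v⟫ / √(1 + ‖γ t‖ ^ 2)) t :=
  ((h.norm_sq.const_add 1).sqrt (by positivity)).congr_deriv (mul_div_mul_left _ _ two_ne_zero)

theorem sqrt_one_add_norm_sq_sub_one_le {x v w : E} (hw : ‖x‖ ^ 2 ≤ ⟪x, w⟫) :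
    √(1 + ‖x‖ ^ 2) - 1 ≤
      (‖v‖ ^ 2 + ⟪x, w⟫) / √(1 + ‖x‖ ^ 2) - ⟪x, v⟫ ^ 2 / √(1 + ‖x‖ ^ 2) ^ 3 := by
  set s := √(1 + ‖x‖ ^ 2)
  have hs : s ^ 2 = 1 + ‖x‖ ^ 2 := sq_sqrt (by positivity)
  have hs1 : 1 ≤ s := one_le_sqrt.2 (le_add_of_nonneg_right (by positivity))
  have hs0 : 0 < s := zero_lt_one.trans_le hs1
  have hcs : ⟪x, v⟫ ^ 2 ≤ ‖x‖ ^ 2 * ‖v‖ ^ 2 := by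
    rw [← mul_pow]; exact sq_le_sq' (neg_le_of_abs_le (abs_real_inner_le_norm x v))
      (real_inner_le_norm x v)
  calc s - 1 ≤ s - 1 / s := by gcongr; exact div_le_one_of_le₀ hs1 hs0.le
    _ = ‖x‖ ^ 2 / s := by field_simp; linarith
    _ ≤ ‖x‖ ^ 2 / s + ‖v‖ ^ 2 / s ^ 3 := le_add_of_nonneg_right (by positivity)
    _ = (‖v‖ ^ 2 + ‖x‖ ^ 2) / s - ‖x‖ ^ 2 * ‖v‖ ^ 2 / s ^ 3 := by
      field_simp
      rw [hs]; ring
    _ ≤ (‖v‖ ^ 2 + ⟪x, w⟫) / s - ⟪x, v⟫ ^ 2 / s ^ 3 := by gcongr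

theorem eq_zero_of_norm_sq_le_inner_of_isLittleO_exp_abs {γ γ' γ'' : ℝ → E}
    (hγ : ∀ t, HasDerivAt γ (γ' t) t) (hγ' : ∀ t, HasDerivAt γ' (γ'' t) t)
    (hw : ∀ t, ‖γ t‖ ^ 2 ≤ ⟪γ t, γ'' t⟫)
    (htop : (fun t => ‖γ t‖) =o[atTop] fun t => exp |t|)
    (hbot : (fun t => ‖γ t‖) =o[atBot] fun t => exp |t|) (t : ℝ) : γ t = 0 := by
  set s : ℝ → ℝ := fun t => √(1 + ‖γ t‖ ^ 2)
  have hs : ∀ t, s t ≠ 0 := fun t => (sqrt_pos.2 (by positivity)).ne'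
  have hu : ∀ t, HasDerivAt (fun t => s t - 1) (⟪γ t, γ' t⟫ / s t) t := fun t =>
    (hγ t).sqrt_one_add_norm_sq.sub_const 1
  have hp : ∀ t, HasDerivAt (fun t => ⟪γ t, γ' t⟫ / s t)
      ((‖γ' t‖ ^ 2 + ⟪γ t, γ'' t⟫) / s t - ⟪γ t, γ' t⟫ ^ 2 / s t ^ 3) t := fun t =>
    (((hγ t).inner ℝ (hγ' t)).div (hγ t).sqrt_one_add_norm_sq (hs t)).congr_deriv <| by
      have := hs t
      rw [real_inner_self_eq_norm_sq]
      field_simp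
      ring
  have hle : (fun t => s t - 1) =O[⊤] fun t => ‖γ t‖ := isBigO_of_le _ fun t => by
    have h₀ : 0 ≤ s t - 1 := sub_nonneg.2 (one_le_sqrt.2 (le_add_of_nonneg_right (by positivity)))
    have h₁ : s t ≤ 1 + ‖γ t‖ := sqrt_le_iff.2 ⟨by positivity, by nlinarith [norm_nonneg (γ t)]⟩
    rw [norm_norm, norm_of_nonneg h₀]
    linarith
  have hst := nonpos_of_le_deriv_deriv hu hp (fun t => sqrt_one_add_norm_sq_sub_one_le (hw t))
    ((hle.mono le_top).trans_isLittleO htop) ((hle.mono le_top).trans_isLittleO hbot) t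
  have : 1 + ‖γ t‖ ^ 2 ≤ 1 := sqrt_le_one.1 (by linarith)
  exact norm_eq_zero.1 (by nlinarith [norm_nonneg (γ t)])

end Curve

theorem stmt8 (E : Type*) [NormedAddCommGroup E] [InnerProductSpace ℝ E]
    (I : ℝ → E) (hd1 : Differentiable ℝ I) (hd2 : Differentiable ℝ (deriv I))
    (R : ℝ → E →ₗ[ℝ] E)
    (hJacobi : ∀ t, deriv (deriv I) t + R t (I t) = 0)
    (hK : ∀ t, ∀ v : E, ⟪R t v, v⟫ ≤ -‖v‖ ^ 2)
    (hsubTop : (fun t => ‖I t‖) =o[Filter.atTop] fun t : ℝ => Real.exp |t|)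
    (hsubBot : (fun t => ‖I t‖) =o[Filter.atBot] fun t : ℝ => Real.exp |t|) :
    ∀ t, I t = 0 := by
  refine eq_zero_of_norm_sq_le_inner_of_isLittleO_exp_abs (fun t => (hd1 t).hasDerivAt)
    (fun t => (hd2 t).hasDerivAt) (fun t => ?_) hsubTop hsubBot
  rw [eq_neg_of_add_eq_zero_left (hJacobi t), real_inner_comm, inner_neg_left]
  linarith [hK t (I t)]
end
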